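/- (Zeilberger–Bressoud $q$-Dyson theorem, case $n=2$.) For nonnegative integers $a_1, a_2$, the constant term in $x_1, x_2$ of the Laurent polynomial $(x_1/x_2;q)_{a_1} (q x_2/x_1;q)_{a_2}$ equals $\binom{a_1+a_2}{a_1}_q = \frac{(q;q)_{a_1+a_2}}{(q;q)_{a_1}(q;q)_{a_2}}$. -/

import Mathlib

noncomputable section

/-- The field ℚ(q). -/
abbrev F : Type := RatFunc ℚ

/-- The variable `q`. -/
def qq : F := RatFunc.X

/-- Laurent polynomials in `x_1, …, x_n` over ℚ(q). -/
abbrev R (n : ℕ) : Type := AddMonoidAlgebra F (Fin n →₀ ℤ)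

/-- The Laurent monomial `x^u = x_1^{u_1} ⋯ x_n^{u_n}`. -/
def Xm {n : ℕ} (u : Fin n → ℤ) : R n :=
  AddMonoidAlgebra.single (Finsupp.equivFunOnFinite.symm u) 1

/-- Scalar (coefficient) embedding of ℚ(q). -/
def CC {n : ℕ} (c : F) : R n := AddMonoidAlgebra.single 0 c

/-- The constant term: the coefficient of `x_1^0 ⋯ x_n^0`. -/
def CT {n : ℕ} (p : R n) : F := p.coeff 0

/-- q-shifted factorial `(z;q)_m`. -/
def qpoch {A : Type*} [CommRing A] (z q : A) (m : ℕ) : A :=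
  ∏ l ∈ Finset.range m, (1 - z * q ^ l)

/-- q-binomial coefficient `[N, k]_q = (q^{N-k+1};q)_k / (q;q)_k`. -/
def qbinom (N k : ℕ) : F := qpoch (qq ^ ((N : ℤ) - k + 1)) qq k / qpoch qq qq k

/-- Complete homogeneous symmetric polynomial `h_r` of a list of elements. -/
def hh {A : Type*} [CommRing A] : ℕ → List A → A
  | 0, _ => 1
  | _ + 1, [] => 0
  | r + 1, z :: L => z * hh r (z :: L) + hh (r + 1) L
  termination_by r L => (r, L.length)

/-- The q-Dyson Laurent polynomial `∏_{i<j} (x_i/x_j;q)_{a_i} (q x_j/x_i;q)_{a_j}`. -/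
def dyson {n : ℕ} (a : Fin n → ℕ) : R n :=
  ∏ i : Fin n, ∏ j ∈ Finset.Ioi i,
    qpoch (Xm (Pi.single i 1 - Pi.single j 1)) (CC qq) (a i) *
      qpoch (CC qq * Xm (Pi.single j 1 - Pi.single i 1)) (CC qq) (a j)

/-- The alphabet `x^(a) = (x_j q^l : 1 ≤ j ≤ n, 0 ≤ l ≤ a_j - 1)` as a list. -/
def baseAlph {n : ℕ} (a : Fin n → ℕ) : List (R n) :=
  (List.finRange n).flatMap fun j =>
    (List.range (a j)).map fun l => Xm (Pi.single j 1) * CC (qq ^ l)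

/-- The alphabet `x_i^(a)`: `x^(a)` together with the extra element `x_i q⁻¹`. -/
def alph {n : ℕ} (a : Fin n → ℕ) (i : Fin n) : List (R n) :=
  (Xm (Pi.single i 1) * CC qq⁻¹) :: baseAlph a

/-- The generalized q-Dyson constant term `D_{v,λ}(a)`. -/
def Dconst {n : ℕ} (a : Fin n → ℕ) (v : Fin n → ℤ) (lam : Fin n → ℕ) : F :=
  CT (Xm (fun i => -v i) * (∏ i : Fin n, hh (lam i) (alph a i)) * dyson a)

/-! With `t = x₁/x₂` the Laurent polynomial is the image of `f_{a,b}(t) = (t;q)_a (q/t;q)_b`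
under a substitution that is injective on exponents, so it suffices to find the constant term
of `f_{a,b}`. Multiplying by `1 - q^a t` or by `1 - q^{b+1}/t` gives recursions in `a`
and `b` for all coefficients of `f_{a,b}`; by the two q-Pascal rules they are solved by
`[t^m] f_{a,b} = (-1)^m q^{m(m-1)/2} [a+b; a-m, b+m]_q`, which at `m = 0` is the q-binomial
coefficient. -/

open Finset LaurentPolynomial

section QPochhammer

variable {A : Type*} [CommRing A]

lemma qpoch_zero (z q : A) : qpoch z q 0 = 1 := prod_range_zero _

lemma qpoch_succ (z q : A) (m : ℕ) : qpoch z q (m + 1) = qpoch z q m * (1 - z * q ^ m) :=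
  prod_range_succ _ _

lemma qpoch_add (z q : A) (m n : ℕ) :
    qpoch z q (m + n) = qpoch z q m * qpoch (z * q ^ m) q n := by
  simp only [qpoch, prod_range_add, pow_add, mul_assoc]

lemma map_qpoch {B : Type*} [CommRing B] (f : A →+* B) (z q : A) (m : ℕ) :
    f (qpoch z q m) = qpoch (f z) (f q) m := by
  simp [qpoch]

end QPochhammer

lemma qq_ne_zero : qq ≠ 0 := RatFunc.X_ne_zero

lemma one_sub_qq_pow_ne_zero {n : ℕ} (hn : n ≠ 0) : 1 - qq ^ n ≠ 0 := by
  have h := Polynomial.X_pow_sub_C_ne_zero (R := ℚ) (Nat.pos_of_ne_zero hn) 1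
  rw [← neg_ne_zero, neg_sub, qq, ← RatFunc.algebraMap_X, ← map_pow,
    ← map_one (algebraMap (Polynomial ℚ) F), ← map_sub]
  exact (map_ne_zero_iff _ (RatFunc.algebraMap_injective ℚ)).2 (by simpa using h)

lemma qpoch_qq_ne_zero (n : ℕ) : qpoch qq qq n ≠ 0 :=
  prod_ne_zero_iff.2 fun l _ => by
    rw [← pow_succ']
    exact one_sub_qq_pow_ne_zero l.succ_ne_zero

lemma qbinom_add_left (i j : ℕ) :
    qbinom (i + j) i = qpoch qq qq (j + i) / (qpoch qq qq i * qpoch qq qq j) := by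
  have hexp : ((i + j : ℕ) : ℤ) - i + 1 = ((j + 1 : ℕ) : ℤ) := by push_cast; ring
  rw [qbinom, hexp, zpow_natCast, pow_succ', qpoch_add, mul_comm (qpoch qq qq i),
    mul_div_mul_left _ _ (qpoch_qq_ne_zero j)]

-- `[i + j; i, j]_q`, extended by `0` to `i < 0` or `j < 0`.
def qmultinom (i j : ℤ) : F :=
  if 0 ≤ i ∧ 0 ≤ j then
    qpoch qq qq (i + j).toNat / (qpoch qq qq i.toNat * qpoch qq qq j.toNat)
  else 0

lemma qmultinom_comm (i j : ℤ) : qmultinom i j = qmultinom j i := by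
  simp only [qmultinom, and_comm, add_comm i j, mul_comm (qpoch qq qq i.toNat)]

lemma qmultinom_natCast (i j : ℕ) :
    qmultinom i j = qpoch qq qq (i + j) / (qpoch qq qq i * qpoch qq qq j) := by
  simp only [qmultinom, Nat.cast_nonneg, and_self, if_true, ← Nat.cast_add, Int.toNat_natCast]

lemma qmultinom_of_neg_left {i : ℤ} (hi : i < 0) (j : ℤ) : qmultinom i j = 0 :=
  if_neg fun h => hi.not_ge h.1

lemma qmultinom_of_neg_right (i : ℤ) {j : ℤ} (hj : j < 0) : qmultinom i j = 0 := by
  rw [qmultinom_comm, qmultinom_of_neg_left hj]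

lemma qmultinom_zero_left {j : ℤ} (hj : 0 ≤ j) : qmultinom 0 j = 1 := by
  lift j to ℕ using hj
  rw [← Nat.cast_zero, qmultinom_natCast, zero_add, qpoch_zero, one_mul,
    div_self (qpoch_qq_ne_zero j)]

lemma qmultinom_zero_right {i : ℤ} (hi : 0 ≤ i) : qmultinom i 0 = 1 := by
  rw [qmultinom_comm, qmultinom_zero_left hi]

lemma qmultinom_natCast_succ_succ (i j : ℕ) :
    qmultinom (i + 1 : ℕ) (j + 1 : ℕ) =
      qmultinom i (j + 1 : ℕ) + qq ^ (i + 1) * qmultinom (i + 1 : ℕ) j := by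
  simp only [qmultinom_natCast, show i + 1 + (j + 1) = i + j + 1 + 1 by ring,
    show i + (j + 1) = i + j + 1 by ring, show i + 1 + j = i + j + 1 by ring, qpoch_succ]
  have := qpoch_qq_ne_zero i
  have := qpoch_qq_ne_zero j
  have : 1 - qq * qq ^ i ≠ 0 := by rw [← pow_succ']; exact one_sub_qq_pow_ne_zero i.succ_ne_zero
  have : 1 - qq * qq ^ j ≠ 0 := by rw [← pow_succ']; exact one_sub_qq_pow_ne_zero j.succ_ne_zero
  field_simp
  ring

-- At `i = j = -1` the left side is `1` and the right side `0`.
lemma qmultinom_succ_succ {i j : ℤ} (h : 0 ≤ i + j + 1) :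
    qmultinom (i + 1) (j + 1) = qmultinom i (j + 1) + qq ^ (i + 1) * qmultinom (i + 1) j := by
  rcases lt_or_ge i (-1) with hi | hi
  · simp only [qmultinom_of_neg_left (show i < 0 by omega),
      qmultinom_of_neg_left (show i + 1 < 0 by omega)]
    ring
  rcases lt_or_ge j (-1) with hj | hj
  · simp only [qmultinom_of_neg_right _ (show j < 0 by omega),
      qmultinom_of_neg_right _ (show j + 1 < 0 by omega)]
    ring
  rcases hi.eq_or_lt with rfl | hi
  · rw [neg_add_cancel, qmultinom_zero_left (by omega), qmultinom_zero_left (by omega),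
      qmultinom_of_neg_left (by norm_num), zpow_zero]
    ring
  rcases hj.eq_or_lt with rfl | hj
  · rw [neg_add_cancel, qmultinom_zero_right (by omega), qmultinom_zero_right (by omega),
      qmultinom_of_neg_right _ (by norm_num)]
    ring
  lift i to ℕ using (by omega)
  lift j to ℕ using (by omega)
  exact_mod_cast qmultinom_natCast_succ_succ i j

lemma LaurentPolynomial.coeff_mul_C_mul_T {S : Type*} [Semiring S] (f : S[T;T⁻¹]) (c : S)
    (n m : ℤ) : (f * (C c * T n)).coeff m = f.coeff (m - n) * c := by
  rw [← single_eq_C_mul_T, AddMonoidAlgebra.coeff_mul_single_apply, sub_eq_add_neg]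

-- `(t;q)_a (q/t;q)_b`, which becomes `dyson ![a, b]` under `t ↦ x₁/x₂`.
def dysonTwo (a b : ℕ) : F[T;T⁻¹] := qpoch (T 1) (C qq) a * qpoch (C qq * T (-1)) (C qq) b

lemma dysonTwo_zero_zero : dysonTwo 0 0 = 1 := by
  rw [dysonTwo, qpoch_zero, qpoch_zero, one_mul]

lemma dysonTwo_succ_left (a b : ℕ) :
    dysonTwo (a + 1) b = dysonTwo a b - dysonTwo a b * (C (qq ^ a) * T 1) := by
  rw [dysonTwo, dysonTwo, qpoch_succ, map_pow]
  ring

lemma dysonTwo_succ_right (a b : ℕ) :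
    dysonTwo a (b + 1) = dysonTwo a b - dysonTwo a b * (C (qq ^ (b + 1)) * T (-1)) := by
  rw [dysonTwo, dysonTwo, qpoch_succ, map_pow, pow_succ']
  ring

def dysonCoeff (a b : ℕ) (m : ℤ) : F :=
  (-1) ^ m * qq ^ (m * (m - 1) / 2) * qmultinom (a - m) (b + m)

lemma mul_pred_div_two_succ (m : ℤ) : (m + 1) * m / 2 = m * (m - 1) / 2 + m := by
  rw [show (m + 1) * m = m * (m - 1) + m * 2 by ring, Int.add_mul_ediv_right _ _ two_ne_zero]

lemma dysonCoeff_succ_left (a b : ℕ) (m : ℤ) :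
    dysonCoeff (a + 1) b m = dysonCoeff a b m - dysonCoeff a b (m - 1) * qq ^ a := by
  obtain ⟨k, rfl⟩ : ∃ k, m = k + 1 := ⟨m - 1, by ring⟩
  have pascal := qmultinom_succ_succ (i := a - (k + 1)) (j := b + k) (by omega)
  rw [show (a : ℤ) - (k + 1) + 1 = a - k by ring, add_assoc] at pascal
  simp only [dysonCoeff, add_sub_cancel_right, mul_pred_div_two_succ, Nat.cast_succ,
    add_sub_add_right_eq_sub, pascal, zpow_add₀ qq_ne_zero,
    zpow_add_one₀ (show (-1 : F) ≠ 0 by norm_num)]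
  have hqa : qq ^ k * qq ^ ((a : ℤ) - k) = qq ^ a := by
    rw [← zpow_add₀ qq_ne_zero, add_sub_cancel, zpow_natCast]
  linear_combination (-(-1) ^ k * qq ^ (k * (k - 1) / 2) * qmultinom (a - k) (b + k)) * hqa

lemma dysonCoeff_succ_right (a b : ℕ) (m : ℤ) :
    dysonCoeff a (b + 1) m = dysonCoeff a b m - dysonCoeff a b (m + 1) * qq ^ (b + 1) := by
  have pascal := qmultinom_succ_succ (i := b + m) (j := a - (m + 1)) (by omega)
  rw [show (a : ℤ) - (m + 1) + 1 = a - m by ring, qmultinom_comm, qmultinom_comm (b + m),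
    qmultinom_comm (b + m + 1), show (b : ℤ) + m + 1 = b + (m + 1) by ring] at pascal
  simp only [dysonCoeff, add_sub_cancel_right, mul_pred_div_two_succ, Nat.cast_succ,
    zpow_add_one₀ (show (-1 : F) ≠ 0 by norm_num)]
  rw [show (b : ℤ) + 1 + m = b + (m + 1) by ring, pascal]
  have hq : qq ^ (m * (m - 1) / 2 + m) * qq ^ (b + 1) =
      qq ^ (m * (m - 1) / 2) * qq ^ ((b : ℤ) + (m + 1)) := by
    rw [← zpow_natCast, ← zpow_add₀ qq_ne_zero, ← zpow_add₀ qq_ne_zero]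
    push_cast
    ring_nf
  linear_combination (-(-1) ^ m * qmultinom (a - (m + 1)) (b + (m + 1))) * hq

lemma coeff_dysonTwo (a b : ℕ) (m : ℤ) : (dysonTwo a b).coeff m = dysonCoeff a b m := by
  induction a generalizing m with
  | zero =>
    induction b generalizing m with
    | zero =>
      rw [dysonTwo_zero_zero, ← T_zero, T, AddMonoidAlgebra.coeff_single, Finsupp.single_apply,
        dysonCoeff]
      rcases lt_trichotomy m 0 with hm | rfl | hm
      · rw [if_neg hm.ne', qmultinom_of_neg_right _ (by simpa using hm), mul_zero]
      · simp [qmultinom_zero_left]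
      · rw [if_neg hm.ne, qmultinom_of_neg_left (by simpa using hm), mul_zero]
    | succ b ih =>
      rw [dysonTwo_succ_right, AddMonoidAlgebra.coeff_sub, Finsupp.sub_apply, coeff_mul_C_mul_T,
        ih, ih, sub_neg_eq_add, dysonCoeff_succ_right]
  | succ a ih =>
    rw [dysonTwo_succ_left, AddMonoidAlgebra.coeff_sub, Finsupp.sub_apply, coeff_mul_C_mul_T,
      ih, ih, dysonCoeff_succ_left]

def ratioExp : Fin 2 →₀ ℤ := Finsupp.equivFunOnFinite.symm (Pi.single 0 1 - Pi.single 1 1)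

lemma zmultiplesHom_ratioExp_injective : Function.Injective (zmultiplesHom _ ratioExp) := by
  intro m n h
  simpa [ratioExp] using congrArg (· 0) h

-- The substitution `t ↦ x₁/x₂`.
def substRatio : F[T;T⁻¹] →+* R 2 :=
  AddMonoidAlgebra.mapDomainRingHom F (zmultiplesHom _ ratioExp)

lemma substRatio_T (n : ℤ) : substRatio (T n) = AddMonoidAlgebra.single (n • ratioExp) 1 :=
  AddMonoidAlgebra.mapDomain_single

lemma substRatio_C (c : F) : substRatio (C c) = CC c := by
  rw [← single_eq_C, CC]
  exact (AddMonoidAlgebra.mapDomain_single).trans (by rw [map_zero])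

lemma CT_substRatio (p : F[T;T⁻¹]) : CT (substRatio p) = p.coeff 0 := by
  show Finsupp.mapDomain _ p.coeff 0 = p.coeff 0
  rw [← map_zero (zmultiplesHom _ ratioExp),
    Finsupp.mapDomain_apply zmultiplesHom_ratioExp_injective]

lemma dyson_two (a : Fin 2 → ℕ) :
    dyson a = qpoch (Xm (Pi.single 0 1 - Pi.single 1 1)) (CC qq) (a 0) *
      qpoch (CC qq * Xm (Pi.single 1 1 - Pi.single 0 1)) (CC qq) (a 1) := by
  rw [dyson, Fin.prod_univ_two, show Ioi (0 : Fin 2) = {1} by decide,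
    show Ioi (1 : Fin 2) = ∅ by decide, prod_singleton, prod_empty, mul_one]

lemma substRatio_dysonTwo (a : Fin 2 → ℕ) : substRatio (dysonTwo (a 0) (a 1)) = dyson a := by
  have hneg : (-1 : ℤ) • ratioExp =
      Finsupp.equivFunOnFinite.symm (Pi.single 1 1 - Pi.single 0 1) := by
    ext k
    fin_cases k <;> simp [ratioExp]
  rw [dyson_two, dysonTwo, map_mul, map_qpoch, map_qpoch, map_mul, substRatio_T, substRatio_T,
    substRatio_C, one_smul, hneg]
  rfl

/-- The Zeilberger–Bressoud q-Dyson theorem for n = 2. -/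
theorem stmt6 (a : Fin 2 → ℕ) :
    CT (dyson a) = qbinom (a 0 + a 1) (a 0) := by
  rw [← substRatio_dysonTwo, CT_substRatio, coeff_dysonTwo, qbinom_add_left, add_comm,
    ← qmultinom_natCast]
  simp [dysonCoeff]

end
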